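/- arXiv:1807.03822 — 8 statements merged into one kernel-verified Lean document; each statement's English description precedes it below -/
import Mathlib

section
/- Every almost uniformly continuous function between metric spaces is CC-regular, i.e., maps cofinally Cauchy sequences to cofinally Cauchy sequences. -/
open Metric Filter

/-- A sequence is cofinally Cauchy if for every ε>0 there is an infinite index set
on which all pairwise distances are < ε. -/
def CofinallyCauchy {X : Type*} [MetricSpace X] (x : ℕ → X) : Prop :=
  ∀ ε > 0, ∃ N : Set ℕ, N.Infinite ∧ ∀ n ∈ N, ∀ j ∈ N, dist (x n) (x j) < ε

/-- A function is almost bounded if for every ε>0 there is δ>0 such that the image of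
every set of diameter < δ is contained in a finite union of open ε-balls. -/
def AlmostBounded {X Y : Type*} [MetricSpace X] [MetricSpace Y] (f : X → Y) : Prop :=
  ∀ ε > 0, ∃ δ > 0, ∀ A : Set X, EMetric.diam A < ENNReal.ofReal δ →
    ∃ B : Finset Y, f '' A ⊆ ⋃ b ∈ B, Metric.ball b ε

/-- A metric space is cofinally complete if every cofinally Cauchy sequence clusters. -/
def CofinallyComplete (X : Type*) [MetricSpace X] : Prop :=
  ∀ x : ℕ → X, CofinallyCauchy x → ∃ p : X, MapClusterPt p atTop x

/-- The local total boundedness functional. -/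
noncomputable def tFun {X : Type*} [MetricSpace X] (x : X) : ℝ :=
  sSup {ε : ℝ | 0 < ε ∧ TotallyBounded (Metric.ball x ε)}

theorem Set.Infinite.exists_infinite_inter_of_subset_biUnion {ι α : Type*} {N : Set α}
    (hN : N.Infinite) {B : Set ι} (hB : B.Finite) {s : ι → Set α} (h : N ⊆ ⋃ b ∈ B, s b) :
    ∃ b ∈ B, (N ∩ s b).Infinite := by
  by_contra! hfin
  refine hN ((hB.biUnion hfin).subset fun n hn => ?_)
  obtain ⟨b, hbB, hnb⟩ := Set.mem_iUnion₂.mp (h hn)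
  exact Set.mem_iUnion₂.mpr ⟨b, hbB, hn, hnb⟩

theorem CofinallyCauchy.exists_ediam_image_lt {X : Type*} [MetricSpace X] {x : ℕ → X}
    (hx : CofinallyCauchy x) {δ : ℝ} (hδ : 0 < δ) :
    ∃ N : Set ℕ, N.Infinite ∧ ediam (x '' N) < ENNReal.ofReal δ := by
  obtain ⟨N, hN, hdist⟩ := hx (δ / 2) (half_pos hδ)
  refine ⟨N, hN, ?_⟩
  calc ediam (x '' N) ≤ ENNReal.ofReal (δ / 2) :=
        ediam_image_le_iff.mpr fun n hn j hj => by
          rw [edist_dist]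
          exact ENNReal.ofReal_le_ofReal (hdist n hn j hj).le
    _ < ENNReal.ofReal δ := (ENNReal.ofReal_lt_ofReal_iff hδ).mpr (half_lt_self hδ)

theorem cofinallyCauchy_of_forall_finite_ball_cover {Y : Type*} [MetricSpace Y] {y : ℕ → Y}
    (h : ∀ ε > 0, ∃ N : Set ℕ, N.Infinite ∧ ∃ B : Finset Y, y '' N ⊆ ⋃ b ∈ B, ball b ε) :
    CofinallyCauchy y := by
  intro ε hε
  obtain ⟨N, hN, B, hcover⟩ := h (ε / 2) (half_pos hε)
  have hN_cover : N ⊆ ⋃ b ∈ B, y ⁻¹' ball b (ε / 2) := by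
    simpa only [Set.image_subset_iff, Set.preimage_iUnion₂] using hcover
  -- pigeonhole: one of the finitely many balls contains infinitely many terms
  obtain ⟨b, -, hinf⟩ := hN.exists_infinite_inter_of_subset_biUnion B.finite_toSet hN_cover
  refine ⟨_, hinf, fun n hn j hj => ?_⟩
  calc dist (y n) (y j) ≤ dist (y n) b + dist (y j) b := dist_triangle_right _ _ _
    _ < ε / 2 + ε / 2 := add_lt_add hn.2 hj.2
    _ = ε := add_halves ε

theorem almostUniformlyContinuous_ccRegular_general {X Y : Type*} [MetricSpace X] [MetricSpace Y]
    (f : X → Y) (hb : AlmostBounded f)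
    (x : ℕ → X) (hx : CofinallyCauchy x) :
    CofinallyCauchy (fun n => f (x n)) := by
  refine cofinallyCauchy_of_forall_finite_ball_cover fun ε hε => ?_
  obtain ⟨δ, hδ, hcover⟩ := hb ε hε
  obtain ⟨N, hN, hdiam⟩ := hx.exists_ediam_image_lt hδ
  obtain ⟨B, hB⟩ := hcover _ hdiam
  exact ⟨N, hN, B, by rwa [Set.image_image] at hB⟩

/-- Every almost uniformly continuous function is CC-regular. -/
theorem almostUniformlyContinuous_ccRegular {X Y : Type*} [MetricSpace X] [MetricSpace Y]
    (f : X → Y) (hc : Continuous f) (hb : AlmostBounded f)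
    (x : ℕ → X) (hx : CofinallyCauchy x) :
    CofinallyCauchy (fun n => f (x n)) :=
  almostUniformlyContinuous_ccRegular_general f hb x hx
end

section
/- Every cofinally complete metric space is an AUC space, i.e., every continuous real-valued function on a cofinally complete metric space is almost uniformly continuous. -/
open Metric Filter

/-!
If a continuous `f` were not uniformly locally bounded, there would be balls `B n` of radius
`1 / (n + 1)` on each of which `f` is unbounded. Visiting every `B n` infinitely often, pick
points `z i` with `f (z i)` escaping to infinity: `z` is cofinally Cauchy, so it clusters at
some `p`, and continuity of `f` at `p` keeps infinitely many `f (z i)` bounded. A uniform bound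
on balls of radius `δ` then makes `f` almost bounded, since bounded sets of `ℝ` are totally
bounded.
-/

section

variable {X Y : Type*} [MetricSpace X]

def UniformlyLocallyBounded [PseudoMetricSpace Y] (f : X → Y) : Prop :=
  ∃ δ > 0, ∀ x, Bornology.IsBounded (f '' ball x δ)

theorem cofinallyCauchy_of_infinite_near {z : ℕ → X}
    (h : ∀ ε > 0, ∃ c, {i | dist (z i) c < ε}.Infinite) : CofinallyCauchy z := by
  intro ε hε
  obtain ⟨c, hc⟩ := h (ε / 2) (half_pos hε)
  refine ⟨_, hc, fun n hn j hj => ?_⟩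
  calc dist (z n) (z j) ≤ dist (z n) c + dist (z j) c := dist_triangle_right _ _ _
    _ < ε / 2 + ε / 2 := add_lt_add hn hj
    _ = ε := add_halves ε

theorem MapClusterPt.not_tendsto_dist_atTop [PseudoMetricSpace Y] {z : ℕ → X} {p : X}
    (hp : MapClusterPt p atTop z) {f : X → Y} (hf : ContinuousAt f p) (y₀ : Y) :
    ¬Tendsto (fun i => dist (f (z i)) y₀) atTop atTop := by
  intro hlim
  have hnear : ∃ᶠ i in atTop, dist (f (z i)) (f p) < 1 :=
    hp.frequently (hf.eventually (ball_mem_nhds (f p) one_pos))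
  have hfar : ∀ᶠ i in atTop, dist (f p) y₀ + 1 < dist (f (z i)) y₀ :=
    hlim.eventually_gt_atTop _
  obtain ⟨i, hi_near, hi_far⟩ := (hnear.and_eventually hfar).exists
  linarith [dist_triangle (f (z i)) (f p) y₀]

theorem CofinallyComplete.uniformlyLocallyBounded [PseudoMetricSpace Y]
    (hX : CofinallyComplete X) {f : X → Y} (hf : Continuous f) : UniformlyLocallyBounded f := by
  by_contra hf_unb
  simp only [UniformlyLocallyBounded, not_exists, not_and, not_forall] at hf_unb
  choose c hc using fun n : ℕ => hf_unb (1 / (n + 1)) Nat.one_div_pos_of_nat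
  have hexit : ∀ i : ℕ, ∃ w ∈ ball (c (Nat.unpair i).1) (1 / ((Nat.unpair i).1 + 1)),
      (i : ℝ) < dist (f w) (f (c 0)) := by
    intro i
    have := (isBounded_iff_subset_closedBall (f (c 0))).not.mp (hc (Nat.unpair i).1)
    simp only [not_exists, Set.not_subset, Set.mem_image, mem_closedBall, not_le] at this
    obtain ⟨_, ⟨w, hw, rfl⟩, hw_far⟩ := this i
    exact ⟨w, hw, hw_far⟩
  choose z hz_near hz_far using hexit
  have hz_cauchy : CofinallyCauchy z := by
    refine cofinallyCauchy_of_infinite_near fun ε hε => ?_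
    obtain ⟨n, hn⟩ := exists_nat_one_div_lt hε
    refine ⟨c n, Set.infinite_of_injective_forall_mem (f := (Nat.pair n ·))
      (fun _ _ h => (Nat.pair_eq_pair.mp h).2) fun k => ?_⟩
    have := hz_near (Nat.pair n k)
    rw [Nat.unpair_pair] at this
    exact (mem_ball.mp this).trans hn
  obtain ⟨p, hp⟩ := hX z hz_cauchy
  refine hp.not_tendsto_dist_atTop hf.continuousAt (f (c 0)) ?_
  exact tendsto_atTop_mono (fun i => (hz_far i).le) tendsto_natCast_atTop_atTop

end

theorem UniformlyLocallyBounded.almostBounded {X Y : Type*} [MetricSpace X] [MetricSpace Y]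
    [ProperSpace Y] {f : X → Y} (hf : UniformlyLocallyBounded f) : AlmostBounded f := by
  obtain ⟨δ, hδ, hbdd⟩ := hf
  intro ε hε
  refine ⟨δ, hδ, fun A hA => ?_⟩
  rcases A.eq_empty_or_nonempty with rfl | ⟨a, ha⟩
  · exact ⟨∅, by simp⟩
  have hA_ball : A ⊆ ball a δ := fun w hw =>
    mem_ball.mpr (edist_lt_ofReal.mp ((edist_le_ediam_of_mem hw ha).trans_lt hA))
  have htb : TotallyBounded (f '' A) :=
    ((hbdd a).isCompact_closure.totallyBounded.subset subset_closure).subset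
      (Set.image_mono hA_ball)
  obtain ⟨t, ht, hcover⟩ := totallyBounded_iff.mp htb ε hε
  exact ⟨ht.toFinset, by simpa only [Set.Finite.mem_toFinset] using hcover⟩

/-- Every cofinally complete metric space is an AUC space: every continuous real-valued
function on it is almost uniformly continuous. -/
theorem cofinallyComplete_aucSpace {X : Type*} [MetricSpace X]
    (h : CofinallyComplete X) (f : X → ℝ) (hf : Continuous f) :
    AlmostBounded f :=
  (h.uniformlyLocallyBounded hf).almostBounded
end

section
/- For a metric space (Y,ρ): Y is totally bounded if and only if there exists a metric space (X,d) with a nonempty set of limit points such that every function f:(X,d)→(Y,ρ) is almost bounded. -/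
/-!
If `Y` is totally bounded, every map into `Y` is almost bounded for a trivial reason: its whole
range is covered by finitely many `ε`-balls. Conversely, if `Y` is not totally bounded it contains
an `ε`-separated sequence `y`, and no finitely many `ε/2`-balls can contain infinitely many of its
terms. Given a limit point `x₀` of `X`, the map `z ↦ y ⌊1 / d(z, x₀)⌋₊` sends every ball around
`x₀` onto infinitely many terms of `y`, so it is not almost bounded.
-/

open Metric Filter

open Set Topology

section Separated

variable {Y : Type*} [PseudoMetricSpace Y]

theorem exists_pairwise_le_dist_of_not_totallyBounded (h : ¬TotallyBounded (univ : Set Y)) :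
    ∃ ε > 0, ∃ y : ℕ → Y, Pairwise fun m n => ε ≤ dist (y m) (y n) := by
  rw [Metric.totallyBounded_iff] at h
  push Not at h
  obtain ⟨ε, hε, hcover⟩ := h
  have : Std.Symm fun a b : Y => ε ≤ dist a b := ⟨fun a b h => by rwa [dist_comm]⟩
  obtain ⟨y, -, hy⟩ := exists_seq_of_forall_finset_exists' (fun _ => True)
    (fun a b : Y => ε ≤ dist a b) fun s _ => by
      obtain ⟨z, -, hz⟩ := not_subset.mp (hcover s s.finite_toSet)
      simp only [mem_iUnion, mem_ball, not_exists, not_lt, Finset.mem_coe] at hz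
      exact ⟨z, trivial, fun b hb => (dist_comm b z).symm ▸ hz b hb⟩
  exact ⟨ε, hε, y, hy⟩

theorem not_image_subset_biUnion_ball_half {ε : ℝ} {y : ℕ → Y}
    (hy : Pairwise fun m n => ε ≤ dist (y m) (y n)) {I : Set ℕ} (hI : I.Infinite)
    (B : Finset Y) : ¬y '' I ⊆ ⋃ b ∈ B, ball b (ε / 2) := by
  intro hsub
  have : Nonempty Y := ⟨y 0⟩
  have hcenter : ∀ n ∈ I, ∃ b ∈ B, dist (y n) b < ε / 2 := fun n hn => by
    simpa only [mem_iUnion, mem_ball, exists_prop] using hsub (mem_image_of_mem y hn)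
  choose! c hcB hc using hcenter
  obtain ⟨m, hm, n, hn, hmn, hcmn⟩ :=
    hI.exists_ne_map_eq_of_mapsTo (t := (B : Set Y)) hcB B.finite_toSet
  have := calc
    ε ≤ dist (y m) (y n) := hy hmn
    _ ≤ dist (y m) (c m) + dist (y n) (c n) := by rw [hcmn]; exact dist_triangle_right _ _ _
    _ < ε / 2 + ε / 2 := add_lt_add (hc m hm) (hc n hn)
  linarith

end Separated

theorem infinite_image_natFloor_inv_dist_ball {X : Type*} [MetricSpace X] {x₀ : X}
    (hx₀ : (𝓝[≠] x₀).NeBot) {r : ℝ} (hr : 0 < r) :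
    ((fun z => ⌊(dist z x₀)⁻¹⌋₊) '' ball x₀ r).Infinite := by
  refine infinite_of_not_bddAbove fun ⟨M, hM⟩ => ?_
  have hρ : 0 < min r (1 / (M + 1 : ℝ)) := lt_min hr (by positivity)
  obtain ⟨z, hz, hzρ⟩ :=
    Metric.mem_closure_iff.mp (mem_closure_iff_nhdsWithin_neBot.mpr hx₀) _ hρ
  rw [dist_comm] at hzρ
  have hpos : 0 < dist z x₀ := dist_pos.mpr hz
  have hlt : (M + 1 : ℝ) < (dist z x₀)⁻¹ := by
    rw [lt_inv_comm₀ (by positivity) hpos, ← one_div]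
    exact hzρ.trans_le (min_le_right _ _)
  have hle : M + 1 ≤ ⌊(dist z x₀)⁻¹⌋₊ := Nat.le_floor (by exact_mod_cast hlt.le)
  have hmem := hM (mem_image_of_mem _ (mem_ball.mpr (hzρ.trans_le (min_le_left _ _))))
  omega

section AlmostBounded

variable {X Y : Type*} [MetricSpace X] [MetricSpace Y]

theorem almostBounded_of_totallyBounded (h : TotallyBounded (univ : Set Y)) (f : X → Y) :
    AlmostBounded f := by
  intro ε hε
  obtain ⟨t, ht, hcover⟩ := Metric.totallyBounded_iff.mp h ε hε
  refine ⟨1, one_pos, fun A _ => ⟨ht.toFinset, fun z _ => ?_⟩⟩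
  simpa only [Finite.mem_toFinset] using hcover (mem_univ z)

theorem AlmostBounded.exists_image_ball_subset {f : X → Y} (hf : AlmostBounded f) {ε : ℝ}
    (hε : 0 < ε) (x : X) : ∃ r > 0, ∃ B : Finset Y, f '' ball x r ⊆ ⋃ b ∈ B, ball b ε := by
  obtain ⟨δ, hδ, hB⟩ := hf ε hε
  refine ⟨δ / 3, by positivity, hB _ ?_⟩
  calc ediam (ball x (δ / 3))
      ≤ ENNReal.ofReal (2 * (δ / 3)) := ediam_le_of_forall_dist_le fun a ha b hb =>
        (dist_triangle_right a b x).trans (by rw [mem_ball] at ha hb; linarith)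
    _ < ENNReal.ofReal δ := (ENNReal.ofReal_lt_ofReal_iff hδ).mpr (by linarith)

theorem exists_not_almostBounded {x₀ : X} (hx₀ : (𝓝[≠] x₀).NeBot)
    (hY : ¬TotallyBounded (univ : Set Y)) : ∃ f : X → Y, ¬AlmostBounded f := by
  obtain ⟨ε, hε, y, hy⟩ := exists_pairwise_le_dist_of_not_totallyBounded hY
  refine ⟨fun z => y ⌊(dist z x₀)⁻¹⌋₊, fun hf => ?_⟩
  obtain ⟨r, hr, B, hB⟩ := hf.exists_image_ball_subset (half_pos hε) x₀
  rw [← image_image y] at hB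
  exact not_image_subset_biUnion_ball_half hy (infinite_image_natFloor_inv_dist_ball hx₀ hr) B hB

end AlmostBounded

/-- Y is totally bounded iff there exists a metric space X with a nonempty set of limit
points such that every function from X to Y is almost bounded. -/
theorem totallyBounded_iff_exists_space_almostBounded {Y : Type} [MetricSpace Y] :
    TotallyBounded (Set.univ : Set Y) ↔
      ∃ (X : Type) (_ : MetricSpace X),
        (∃ x : X, (nhdsWithin x {x}ᶜ).NeBot) ∧ ∀ f : X → Y, AlmostBounded f := by
  constructor
  · exact fun h => ⟨ℝ, inferInstance, ⟨0, inferInstance⟩, almostBounded_of_totallyBounded h⟩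
  · rintro ⟨X, _, ⟨x₀, hx₀⟩, hf⟩
    by_contra hY
    obtain ⟨f, hnf⟩ := exists_not_almostBounded hx₀ hY
    exact hnf (hf f)
end

section
/- Every almost bounded function from a metric space (X,d) to every metric space (Y,ρ) is continuous if and only if (X,d) is topologically discrete. -/
open Metric Filter

/-! A function with finite range is almost bounded, whatever the metric on its domain. Hence if
all almost bounded functions are continuous, so is the indicator `X → ℕ` of a point `p`; as `ℕ`
is discrete, its fibre `{p}` over `1` is open. -/

theorem AlmostBounded.of_finite_range {X Y : Type*} [MetricSpace X] [MetricSpace Y] {f : X → Y}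
    (hf : (Set.range f).Finite) : AlmostBounded f := by
  intro ε hε
  refine ⟨1, one_pos, fun A _ => ⟨hf.toFinset, ?_⟩⟩
  rintro _ ⟨x, -, rfl⟩
  exact Set.mem_biUnion (hf.mem_toFinset.2 ⟨x, rfl⟩) (mem_ball_self hε)

/-- Every almost bounded function from X to every metric space is continuous iff X is
topologically discrete. -/
theorem almostBounded_continuous_iff_discrete {X : Type*} [MetricSpace X] :
    (∀ (Y : Type) (_ : MetricSpace Y) (f : X → Y), AlmostBounded f → Continuous f) ↔
      DiscreteTopology X := by
  refine ⟨fun h => discreteTopology_iff_isOpen_singleton.2 fun p => ?_,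
    fun _ _ _ _ _ => continuous_of_discreteTopology⟩
  classical
  let f : X → ℕ := fun x => if x = p then 1 else 0
  have hf : Continuous f := h ℕ _ f <| AlmostBounded.of_finite_range <|
    Set.finite_range_ite Set.finite_range_const Set.finite_range_const
  have hfib : f ⁻¹' {1} = {p} := by
    ext x
    by_cases hx : x = p <;> simp [f, hx]
  simpa only [hfib] using (isOpen_discrete {1}).preimage hf
end

section
/- Every continuous function from a metric space (X,d) into a totally bounded metric space is almost uniformly continuous; consequently, if C is a closed subset of X and f: C → [a,b] is almost uniformly continuous, then f extends to an almost uniformly continuous function F: X → [a,b] with F restricted to C equal to f. -/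
open Metric Filter

/-- A function with totally bounded range is almost bounded. -/
lemma almostBounded_of_totallyBounded_range {X Y : Type*} [MetricSpace X] [MetricSpace Y]
    (f : X → Y) (h : TotallyBounded (Set.range f)) : AlmostBounded f := by
  intro ε hε
  refine ⟨1, one_pos, fun A _ => ?_⟩
  obtain ⟨t, htf, hts⟩ := (totallyBounded_iff.mp h) ε hε
  refine ⟨htf.toFinset, ?_⟩
  intro y hy
  have : y ∈ Set.range f := by rcases hy with ⟨x, _, rfl⟩; exact ⟨x, rfl⟩
  have := hts this
  simpa [Set.Finite.mem_toFinset] using this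

/-- Every continuous function into a totally bounded metric space is almost uniformly
continuous; consequently every almost uniformly continuous function from a closed set C
into [a,b] extends to an almost uniformly continuous function on X into [a,b]. -/
theorem auc_extension {X : Type*} [MetricSpace X] :
    (∀ (Y : Type) (_ : MetricSpace Y), TotallyBounded (Set.univ : Set Y) →
      ∀ f : X → Y, Continuous f → Continuous f ∧ AlmostBounded f) ∧
    (∀ (C : Set X) (_ : IsClosed C) (a b : ℝ) (_ : a ≤ b) (f : C → ℝ),
      (∀ x, f x ∈ Set.Icc a b) → Continuous f → AlmostBounded f →
        ∃ F : X → ℝ, Continuous F ∧ AlmostBounded F ∧ (∀ x, F x ∈ Set.Icc a b) ∧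
          ∀ x : C, F x = f x) := by
  constructor
  · intro Y _ hY f hf
    exact ⟨hf, almostBounded_of_totallyBounded_range f
      (hY.subset (Set.subset_univ _))⟩
  · intro C hC a b hab f hmem hcont _
    -- bundle f as a bounded continuous function
    have hbdd : ∀ x y : C, dist (f x) (f y) ≤ b - a := by
      intro x y
      rw [Real.dist_eq]
      have hx := hmem x; have hy := hmem y
      rw [abs_sub_le_iff]
      constructor <;> linarith [hx.1, hx.2, hy.1, hy.2]
    let fb : BoundedContinuousFunction C ℝ := ⟨⟨f, hcont⟩, ⟨b - a, hbdd⟩⟩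
    have he : Topology.IsClosedEmbedding ((↑) : C → X) := hC.isClosedEmbedding_subtypeVal
    obtain ⟨g, hg_mem, hgf⟩ :=
      BoundedContinuousFunction.exists_extension_forall_mem_Icc_of_isClosedEmbedding
        fb hmem hab he
    refine ⟨g, g.continuous, ?_, hg_mem, fun x => congrFun hgf x⟩
    apply almostBounded_of_totallyBounded_range
    have : Set.range (g : X → ℝ) ⊆ Set.Icc a b := Set.range_subset_iff.mpr hg_mem
    exact (isCompact_Icc.totallyBounded).subset this
end

section
/- A metric space (X,d) is an Atsuji space (every continuous real-valued function on X is uniformly continuous) if and only if every real-valued almost uniformly continuous function on X is uniformly continuous. -/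
open Metric Filter

lemma aux_loc_fin {X : Type*} [MetricSpace X] (f : X → ℝ) (hf : Continuous f)
    (ε : ℝ) (hε : 0 < ε) (u v : ℕ → X) (hd : ∀ n, dist (u n) (v n) < 1/(n+1))
    (hsep : ∀ n, ε ≤ dist (f (u n)) (f (v n))) (p : X) :
    ∃ r > 0, {n : ℕ | dist (u n) p < r}.Finite := by
  by_contra h
  push_neg at h
  have hinf : ∀ k : ℕ, {n : ℕ | dist (u n) p < 1/(k+1)}.Infinite := fun k =>
    h _ (by positivity)
  have hψ : ∀ k : ℕ, ∃ m, m ∈ {n : ℕ | dist (u n) p < 1/(k+1)} ∧ k < m := fun k =>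
    (hinf k).exists_gt k
  choose ψ hmem hgt using hψ
  obtain ⟨δ, hδ, hcont⟩ := Metric.continuous_iff.mp hf p (ε/2) (by positivity)
  obtain ⟨k, hk⟩ := exists_nat_one_div_lt (show (0:ℝ) < δ/2 by positivity)
  have h1 : dist (u (ψ k)) p < 1/(k+1) := hmem k
  have h2 : (1:ℝ)/(ψ k + 1) ≤ 1/(k+1) := by
    apply one_div_le_one_div_of_le (by positivity)
    have hk' : (k:ℝ) ≤ ψ k := Nat.cast_le.mpr (le_of_lt (hgt k))
    linarith
  have hup : dist (u (ψ k)) p < δ := by linarith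
  have hvp : dist (v (ψ k)) p < δ := by
    have := dist_triangle (v (ψ k)) (u (ψ k)) p
    have hd' : dist (v (ψ k)) (u (ψ k)) < 1/(ψ k + 1) := by
      rw [dist_comm]; exact hd (ψ k)
    linarith
  have hfu := hcont _ hup
  have hfv := hcont _ hvp
  have := dist_triangle (f (u (ψ k))) (f p) (f (v (ψ k)))
  have hsep' := hsep (ψ k)
  rw [dist_comm (f p)] at this
  linarith

lemma aux_closed_range {X : Type*} [MetricSpace X] (w : ℕ → X)
    (h : ∀ p, ∃ r > 0, {n : ℕ | dist (w n) p < r}.Finite) : IsClosed (Set.range w) := by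
  rw [← isOpen_compl_iff, Metric.isOpen_iff]
  intro p hp
  obtain ⟨r, hr, hfin⟩ := h p
  by_cases hne : hfin.toFinset.Nonempty
  · set m := hfin.toFinset.inf' hne (fun n => dist (w n) p) with hm
    have hmpos : 0 < m := by
      rw [hm, Finset.lt_inf'_iff]
      intro n _
      exact dist_pos.mpr fun hq => hp ⟨n, hq⟩
    refine ⟨min r m, lt_min hr hmpos, ?_⟩
    rintro q hq ⟨n, rfl⟩
    rw [mem_ball] at hq
    have h1 : dist (w n) p < r := lt_of_lt_of_le hq (min_le_left _ _)
    have h2 : n ∈ hfin.toFinset := hfin.mem_toFinset.mpr h1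
    have h3 := Finset.inf'_le (fun n => dist (w n) p) h2
    have h4 : dist (w n) p < m := lt_of_lt_of_le hq (min_le_right _ _)
    rw [← hm] at h3
    linarith
  · refine ⟨r, hr, ?_⟩
    rintro q hq ⟨n, rfl⟩
    rw [mem_ball] at hq
    exact hne ⟨n, hfin.mem_toFinset.mpr hq⟩

lemma aux_subseq {X : Type*} [MetricSpace X] (x y : ℕ → X)
    (hxy : ∀ n, x n ≠ y n)
    (C : ∀ (F : Finset X) (N : ℕ), ∃ m, N ≤ m ∧ x m ∉ F ∧ y m ∉ F) :
    ∃ φ : ℕ → ℕ, StrictMono φ ∧ ∀ j k, x (φ j) ≠ y (φ k) := by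
  classical
  obtain ⟨g, hg⟩ : ∃ g : ℕ × Finset X → ℕ × Finset X, ∀ s : ℕ × Finset X,
      s.1 < (g s).1 ∧ x (g s).1 ∉ s.2 ∧ y (g s).1 ∉ s.2 ∧
        (g s).2 = insert (x (g s).1) (insert (y (g s).1) s.2) := by
    refine ⟨fun s => ⟨(C s.2 (s.1+1)).choose,
      insert (x (C s.2 (s.1+1)).choose) (insert (y (C s.2 (s.1+1)).choose) s.2)⟩, fun s => ?_⟩
    obtain ⟨h1, h2, h3⟩ := (C s.2 (s.1+1)).choose_spec
    exact ⟨h1, h2, h3, rfl⟩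
  set s : ℕ → ℕ × Finset X := fun k => g^[k] (g (0, ∅)) with hs
  have hs_succ : ∀ k, s (k+1) = g (s k) := fun k => by
    rw [hs]; exact Function.iterate_succ_apply' g k _
  set φ : ℕ → ℕ := fun k => (s k).1 with hφ
  have hmono : StrictMono φ := by
    apply strictMono_nat_of_lt_succ
    intro k
    show (s k).1 < (s (k+1)).1
    rw [hs_succ k]
    exact (hg (s k)).1
  have hinv : ∀ k, ∀ j ≤ k, x (φ j) ∈ (s k).2 ∧ y (φ j) ∈ (s k).2 := by
    intro k
    induction k with
    | zero =>
      intro j hj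
      interval_cases j
      have h0 : s 0 = g (0, ∅) := by rw [hs]; rfl
      show x ((s 0).1) ∈ (s 0).2 ∧ y ((s 0).1) ∈ (s 0).2
      rw [h0, (hg (0, ∅)).2.2.2]
      exact ⟨Finset.mem_insert_self _ _,
        Finset.mem_insert_of_mem (Finset.mem_insert_self _ _)⟩
    | succ k ih =>
      intro j hj
      rw [hs_succ k, (hg (s k)).2.2.2]
      rcases Nat.lt_or_ge j (k+1) with h | h
      · have := ih j (by omega)
        exact ⟨Finset.mem_insert_of_mem (Finset.mem_insert_of_mem this.1),
          Finset.mem_insert_of_mem (Finset.mem_insert_of_mem this.2)⟩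
      · have hjk : j = k+1 := by omega
        subst hjk
        have hφk : x (φ (k+1)) = x ((g (s k)).1) ∧ y (φ (k+1)) = y ((g (s k)).1) := by
          have : φ (k+1) = (g (s k)).1 := by
            show (s (k+1)).1 = (g (s k)).1
            rw [hs_succ k]
          rw [this]; exact ⟨rfl, rfl⟩
        rw [hφk.1, hφk.2]
        exact ⟨Finset.mem_insert_self _ _,
          Finset.mem_insert_of_mem (Finset.mem_insert_self _ _)⟩
  have hnew : ∀ k, x (φ (k+1)) ∉ (s k).2 ∧ y (φ (k+1)) ∉ (s k).2 := by
    intro k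
    have hφk : φ (k+1) = (g (s k)).1 := by
      show (s (k+1)).1 = (g (s k)).1
      rw [hs_succ k]
    rw [hφk]
    exact ⟨(hg (s k)).2.1, (hg (s k)).2.2.1⟩
  refine ⟨φ, hmono, fun j k => ?_⟩
  rcases lt_trichotomy j k with h | h | h
  · obtain ⟨m, rfl⟩ : ∃ m, k = m + 1 := ⟨k - 1, by omega⟩
    intro heq
    exact (hnew m).2 (heq ▸ (hinv m j (by omega)).1)
  · subst h; exact hxy (φ j)
  · obtain ⟨m, rfl⟩ : ∃ m, j = m + 1 := ⟨j - 1, by omega⟩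
    intro heq
    exact (hnew m).1 (heq ▸ (hinv m k (by omega)).2)

/-- X is an Atsuji space iff every real-valued almost uniformly continuous function on X
is uniformly continuous. -/
theorem atsuji_iff_auc_uniformlyContinuous {X : Type*} [MetricSpace X] :
    (∀ f : X → ℝ, Continuous f → UniformContinuous f) ↔
      (∀ f : X → ℝ, Continuous f → AlmostBounded f → UniformContinuous f) := by
  constructor
  · intro h f hf _
    exact h f hf
  · intro H f hf
    classical
    by_contra hnuc
    rw [Metric.uniformContinuous_iff] at hnuc
    push_neg at hnuc
    obtain ⟨ε, hε, hseq⟩ := hnuc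
    have hxy' : ∀ n : ℕ, ∃ a b : X, dist a b < 1/(n+1) ∧ ε ≤ dist (f a) (f b) := by
      intro n
      obtain ⟨a, b, h1, h2⟩ := hseq (1/(n+1)) (by positivity)
      exact ⟨a, b, h1, h2⟩
    choose x y hdxy hsep using hxy'
    have hne : ∀ n, x n ≠ y n := by
      intro n h
      have := hsep n
      rw [h, dist_self] at this
      linarith
    have Lx : ∀ p, ∃ r > 0, {n : ℕ | dist (x n) p < r}.Finite :=
      aux_loc_fin f hf ε hε x y hdxy hsep
    have Ly : ∀ p, ∃ r > 0, {n : ℕ | dist (y n) p < r}.Finite :=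
      aux_loc_fin f hf ε hε y x (fun n => by rw [dist_comm]; exact hdxy n)
        (fun n => by rw [dist_comm]; exact hsep n)
    have hfx : ∀ p, {n : ℕ | x n = p}.Finite := by
      intro p
      obtain ⟨r, hr, hfin⟩ := Lx p
      exact hfin.subset fun n hn => by
        simp only [Set.mem_setOf_eq] at *
        rw [hn, dist_self]; exact hr
    have hfy : ∀ p, {n : ℕ | y n = p}.Finite := by
      intro p
      obtain ⟨r, hr, hfin⟩ := Ly p
      exact hfin.subset fun n hn => by
        simp only [Set.mem_setOf_eq] at *
        rw [hn, dist_self]; exact hr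
    have C : ∀ (F : Finset X) (N : ℕ), ∃ m, N ≤ m ∧ x m ∉ F ∧ y m ∉ F := by
      intro F N
      have hbad : ({m : ℕ | x m ∈ F ∨ y m ∈ F}).Finite := by
        have hsub : {m : ℕ | x m ∈ F ∨ y m ∈ F} ⊆
            ⋃ p ∈ (F : Set X), ({m : ℕ | x m = p} ∪ {m : ℕ | y m = p}) := by
          rintro m (h | h)
          · exact Set.mem_biUnion h (Or.inl rfl)
          · exact Set.mem_biUnion h (Or.inr rfl)
        exact ((F.finite_toSet).biUnion fun p _ => (hfx p).union (hfy p)).subset hsub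
      obtain ⟨b, hb⟩ := hbad.bddAbove
      have hnotbad : max N (b+1) ∉ {m : ℕ | x m ∈ F ∨ y m ∈ F} := by
        intro hm
        have h1 := hb hm
        have h2 : b + 1 ≤ max N (b+1) := le_max_right _ _
        omega
      rw [Set.mem_setOf_eq] at hnotbad
      push_neg at hnotbad
      exact ⟨max N (b+1), le_max_left _ _, hnotbad.1, hnotbad.2⟩
    obtain ⟨φ, hφ, hdisj⟩ := aux_subseq x y hne C
    set A : Set X := Set.range (fun k => x (φ k)) with hA
    set B : Set X := Set.range (fun k => y (φ k)) with hB
    have LA : ∀ p, ∃ r > 0, {k : ℕ | dist (x (φ k)) p < r}.Finite := by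
      intro p
      obtain ⟨r, hr, hfin⟩ := Lx p
      exact ⟨r, hr, hfin.preimage hφ.injective.injOn⟩
    have LB : ∀ p, ∃ r > 0, {k : ℕ | dist (y (φ k)) p < r}.Finite := by
      intro p
      obtain ⟨r, hr, hfin⟩ := Ly p
      exact ⟨r, hr, hfin.preimage hφ.injective.injOn⟩
    have hAc : IsClosed A := aux_closed_range _ LA
    have hBc : IsClosed B := aux_closed_range _ LB
    have hAne : A.Nonempty := ⟨x (φ 0), 0, rfl⟩
    have hBne : B.Nonempty := ⟨y (φ 0), 0, rfl⟩
    set g : X → ℝ := fun p => infDist p A / (infDist p A + infDist p B) with hg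
    have hden : ∀ p, 0 < infDist p A + infDist p B := by
      intro p
      rcases (infDist_nonneg (s := A) (x := p)).lt_or_eq with h | h
      · have := infDist_nonneg (s := B) (x := p); linarith
      · rcases (infDist_nonneg (s := B) (x := p)).lt_or_eq with h' | h'
        · linarith
        · exfalso
          have hpA : p ∈ A := (hAc.mem_iff_infDist_zero hAne).mpr h.symm
          have hpB : p ∈ B := (hBc.mem_iff_infDist_zero hBne).mpr h'.symm
          obtain ⟨j, hj⟩ := hpA
          obtain ⟨k, hk⟩ := hpB
          exact hdisj j k (hj.trans hk.symm)
    have hgc : Continuous g := by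
      rw [hg]
      exact (continuous_infDist_pt A).div
        ((continuous_infDist_pt A).add (continuous_infDist_pt B)) fun p => (hden p).ne'
    have hg0 : ∀ p, 0 ≤ g p := fun p => div_nonneg infDist_nonneg (hden p).le
    have hg1 : ∀ p, g p ≤ 1 := fun p =>
      (div_le_one (hden p)).mpr (le_add_of_nonneg_right infDist_nonneg)
    have hab : ∀ ε' > (0:ℝ), ∃ δ > (0:ℝ), ∀ S : Set X,
        EMetric.diam S < ENNReal.ofReal δ →
        ∃ Bf : Finset ℝ, g '' S ⊆ ⋃ b ∈ Bf, Metric.ball b ε' := by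
      intro ε' hε'
      refine ⟨1, one_pos, fun S _ => ?_⟩
      obtain ⟨t, htfin, htsub⟩ :=
        Metric.totallyBounded_iff.mp (isCompact_Icc (a := (0:ℝ)) (b := 1)).totallyBounded ε' hε'
      refine ⟨htfin.toFinset, ?_⟩
      rintro z ⟨p, _, rfl⟩
      have hmem : g p ∈ Set.Icc (0:ℝ) 1 := ⟨hg0 p, hg1 p⟩
      have := htsub hmem
      simpa [Set.Finite.mem_toFinset] using this
    have hUC := H g hgc hab
    rw [Metric.uniformContinuous_iff] at hUC
    obtain ⟨δ, hδ, hclose⟩ := hUC (1/2) (by norm_num)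
    obtain ⟨k, hk⟩ := exists_nat_one_div_lt hδ
    have hdlt : dist (x (φ k)) (y (φ k)) < δ := by
      have h1 := hdxy (φ k)
      have h2 : (1:ℝ)/(φ k + 1) ≤ 1/(k+1) := by
        apply one_div_le_one_div_of_le (by positivity)
        have : (k:ℝ) ≤ φ k := Nat.cast_le.mpr hφ.le_apply
        linarith
      linarith
    have hgap := hclose hdlt
    have hgx : g (x (φ k)) = 0 := by
      have h0 : infDist (x (φ k)) A = 0 := infDist_zero_of_mem ⟨k, rfl⟩
      rw [hg]
      simp only [h0, zero_div]
    have hgy : g (y (φ k)) = 1 := by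
      have hB0 : infDist (y (φ k)) B = 0 := infDist_zero_of_mem ⟨k, rfl⟩
      have hApos : infDist (y (φ k)) A ≠ 0 := by
        intro h0
        obtain ⟨j, hj⟩ := (hAc.mem_iff_infDist_zero hAne).mpr h0
        exact hdisj j k hj
      rw [hg]
      show infDist (y (φ k)) A / (infDist (y (φ k)) A + infDist (y (φ k)) B) = 1
      rw [hB0, add_zero, div_self hApos]
    rw [hgx, hgy, Real.dist_eq] at hgap
    norm_num at hgap
end

section
/- A metric space (X,d) is totally bounded if and only if every real-valued almost uniformly continuous function on X is bounded. -/
open Metric Filter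

/-! Totally bounded ⇒ bounded: an almost bounded map sends the finitely many small balls covering
`X` into finitely many `ε`-balls, so its range is totally bounded. Conversely, if `X` is not totally
bounded it contains an `ε`-separated sequence `xₙ`; stacking tents of height `n · ε/4` and radius
`ε/4` on the points `xₙ` gives a continuous unbounded function, and it is almost bounded because a
set of diameter `< ε/2` meets the support of at most one tent. -/

open Set

section AlmostBounded

variable {X Y : Type*} [MetricSpace X] [MetricSpace Y]

theorem AlmostBounded.totallyBounded_image {f : X → Y} (hf : AlmostBounded f) {s : Set X}
    (hs : TotallyBounded s) : TotallyBounded (f '' s) := by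
  rw [Metric.totallyBounded_iff] at hs ⊢
  intro ε hε
  obtain ⟨δ, hδ, hcover⟩ := hf ε hε
  obtain ⟨t, htfin, hst⟩ := hs (δ / 3) (by positivity)
  have hdiam (y : X) : Metric.ediam (ball y (δ / 3)) < ENNReal.ofReal δ := by
    refine (Metric.ediam_le_of_forall_dist_le fun z hz w hw => ?_).trans_lt
      ((ENNReal.ofReal_lt_ofReal_iff hδ).2 (by linarith : 2 * (δ / 3) < δ))
    linarith [dist_triangle_right z w y, mem_ball.1 hz, mem_ball.1 hw]
  choose B hB using fun y => hcover _ (hdiam y)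
  refine ⟨⋃ y ∈ t, (B y : Set Y), htfin.biUnion fun y _ => (B y).finite_toSet, ?_⟩
  rintro _ ⟨z, hz, rfl⟩
  obtain ⟨y, hyt, hzy⟩ := mem_iUnion₂.1 (hst hz)
  obtain ⟨b, hb, hfb⟩ := mem_iUnion₂.1 (hB y (mem_image_of_mem f hzy))
  exact mem_iUnion₂.2 ⟨b, mem_iUnion₂.2 ⟨y, hyt, hb⟩, hfb⟩

theorem almostBounded_of_isBounded_image [ProperSpace Y] {f : X → Y} {δ : ℝ} (hδ : 0 < δ)
    (h : ∀ A : Set X, (∀ z ∈ A, ∀ w ∈ A, dist z w < δ) → Bornology.IsBounded (f '' A)) :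
    AlmostBounded f := by
  intro ε hε
  refine ⟨δ, hδ, fun A hA => ?_⟩
  have hbdd := h A fun z hz w hw =>
    edist_lt_ofReal.1 ((Metric.edist_le_ediam_of_mem hz hw).trans_lt hA)
  obtain ⟨t, -, htfin, hcover⟩ :=
    exists_finite_cover_balls_of_isCompact_closure hbdd.isCompact_closure hε
  exact ⟨htfin.toFinset, by simpa using hcover⟩

end AlmostBounded

theorem exists_seq_pairwise_le_dist_of_not_totallyBounded {X : Type*} [PseudoMetricSpace X]
    {s : Set X} (hs : ¬TotallyBounded s) :
    ∃ ε > 0, ∃ x : ℕ → X, (∀ n, x n ∈ s) ∧ Pairwise fun m n => ε ≤ dist (x m) (x n) := by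
  rw [Metric.totallyBounded_iff] at hs
  push Not at hs
  obtain ⟨ε, hε, hcover⟩ := hs
  obtain ⟨x, hx⟩ := seq_of_forall_finite_exists
    (P := fun c t => c ∈ s ∧ ∀ y ∈ t, ε ≤ dist c y) fun t ht => by
      obtain ⟨c, hcs, hc⟩ := not_subset.1 (hcover t ht)
      simp only [mem_iUnion₂, mem_ball, not_exists, not_lt] at hc
      exact ⟨c, hcs, hc⟩
  have hlt {m n : ℕ} (h : m < n) : ε ≤ dist (x n) (x m) := (hx n).2 _ (mem_image_of_mem x h)
  refine ⟨ε, hε, x, fun n => (hx n).1, fun m n hmn => ?_⟩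
  rcases hmn.lt_or_gt with h | h
  · exact dist_comm (x m) (x n) ▸ hlt h
  · exact hlt h

section Tents

variable {X : Type*} [PseudoMetricSpace X] {r : ℝ}

noncomputable def tent (r : ℝ) (c z : X) : ℝ := max (r - dist z c) 0

theorem continuous_tent (r : ℝ) (c : X) : Continuous (tent r c) := by
  unfold tent
  fun_prop

theorem tent_nonneg (r : ℝ) (c z : X) : 0 ≤ tent r c z := le_max_right _ _

theorem tent_le (hr : 0 ≤ r) (c z : X) : tent r c z ≤ r :=
  max_le (sub_le_self r dist_nonneg) hr

theorem tent_self (hr : 0 ≤ r) (c : X) : tent r c c = r := by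
  simp [tent, hr]

theorem tent_eq_zero {c z : X} (h : r ≤ dist z c) : tent r c z = 0 :=
  max_eq_right (sub_nonpos.2 h)

variable {x : ℕ → X}

theorem exists_forall_tent_eq_zero_of_dist_lt (hsep : Pairwise fun m n => 4 * r ≤ dist (x m) (x n))
    {A : Set X} (hA : ∀ z ∈ A, ∀ w ∈ A, dist z w < 2 * r) :
    ∃ n₀, ∀ m ≠ n₀, ∀ z ∈ A, tent r (x m) z = 0 := by
  by_cases h : ∃ n, ∃ z ∈ A, dist z (x n) < r
  · obtain ⟨n, z, hz, hzn⟩ := h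
    refine ⟨n, fun m hm w hw => tent_eq_zero ?_⟩
    have := dist_triangle4 (x m) w z (x n)
    linarith [hsep hm, hA w hw z hz, dist_comm (x m) w]
  · push Not at h
    exact ⟨0, fun m _ z hz => tent_eq_zero (h m z hz)⟩

/-- Under the separation hypotheses below, at most one term of the `tsum` is nonzero at any
point. -/
noncomputable def tentSeries (r : ℝ) (x : ℕ → X) (z : X) : ℝ := ∑' n : ℕ, n * tent r (x n) z

theorem exists_eqOn_tentSeries (hsep : Pairwise fun m n => 4 * r ≤ dist (x m) (x n))
    {A : Set X} (hA : ∀ z ∈ A, ∀ w ∈ A, dist z w < 2 * r) :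
    ∃ n₀ : ℕ, EqOn (tentSeries r x) (fun z => n₀ * tent r (x n₀) z) A := by
  obtain ⟨n₀, h⟩ := exists_forall_tent_eq_zero_of_dist_lt hsep hA
  exact ⟨n₀, fun z hz => tsum_eq_single n₀ fun m hm => by rw [h m hm z hz, mul_zero]⟩

theorem tentSeries_apply_self (hr : 0 ≤ r) (hsep : Pairwise fun m n => 4 * r ≤ dist (x m) (x n))
    (n : ℕ) : tentSeries r x (x n) = n * r := by
  rw [tentSeries, tsum_eq_single n fun m hm => ?_, tent_self hr]
  rw [tent_eq_zero (by linarith [hsep hm.symm]), mul_zero]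

theorem continuous_tentSeries (hr : 0 < r) (hsep : Pairwise fun m n => 4 * r ≤ dist (x m) (x n)) :
    Continuous (tentSeries r x) := by
  refine continuous_iff_continuousAt.2 fun y => ?_
  obtain ⟨n₀, h⟩ := exists_eqOn_tentSeries hsep (A := ball y r) fun z hz w hw => by
    linarith [dist_triangle_right z w y, mem_ball.1 hz, mem_ball.1 hw]
  exact (continuous_const.mul (continuous_tent r (x n₀))).continuousAt.congr
    (eventuallyEq_of_mem (ball_mem_nhds y hr) h.symm)

end Tents

theorem almostBounded_tentSeries {X : Type*} [MetricSpace X] {r : ℝ} {x : ℕ → X} (hr : 0 < r)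
    (hsep : Pairwise fun m n => 4 * r ≤ dist (x m) (x n)) : AlmostBounded (tentSeries r x) := by
  refine almostBounded_of_isBounded_image (by positivity : 0 < 2 * r) fun A hA => ?_
  obtain ⟨n₀, h⟩ := exists_eqOn_tentSeries hsep hA
  refine (isBounded_Icc 0 (n₀ * r)).subset ?_
  rintro _ ⟨z, hz, rfl⟩
  rw [h hz]
  exact ⟨mul_nonneg n₀.cast_nonneg (tent_nonneg r _ z),
    mul_le_mul_of_nonneg_left (tent_le hr.le _ z) n₀.cast_nonneg⟩

/-- X is totally bounded iff every real-valued almost uniformly continuous function on X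
is bounded. -/
theorem totallyBounded_iff_auc_bounded {X : Type*} [MetricSpace X] :
    TotallyBounded (Set.univ : Set X) ↔
      ∀ f : X → ℝ, Continuous f → AlmostBounded f → ∃ M : ℝ, ∀ x, |f x| ≤ M := by
  constructor
  · intro hX f _ hf
    obtain ⟨M, hM⟩ := isBounded_iff_forall_norm_le.1 (hf.totallyBounded_image hX).isBounded
    exact ⟨M, fun x => hM (f x) (mem_image_of_mem f (mem_univ x))⟩
  · contrapose!
    intro hX
    obtain ⟨ε, hε, x, -, hsep⟩ := exists_seq_pairwise_le_dist_of_not_totallyBounded hX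
    have hr : 0 < ε / 4 := by positivity
    have hsep' : Pairwise fun m n => 4 * (ε / 4) ≤ dist (x m) (x n) := by
      simpa only [mul_div_cancel₀ ε four_ne_zero] using hsep
    refine ⟨tentSeries (ε / 4) x, continuous_tentSeries hr hsep',
      almostBounded_tentSeries hr hsep', fun M => ?_⟩
    obtain ⟨n, hn⟩ := exists_nat_gt (M / (ε / 4))
    refine ⟨x n, ?_⟩
    rw [tentSeries_apply_self hr.le hsep', abs_of_nonneg (by positivity)]
    exact (div_lt_iff₀ hr).1 hn
end

section
/- If f: (X,d) → (Y,ρ) is a function that is uniformly continuous on the set {x ∈ X : I(x) < ε} for some ε > 0, where I(x) = d(x, X \ {x}) is the isolation functional, then f is almost uniformly continuous (continuous and almost bounded). -/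
open Metric Filter

/-- If f is uniformly continuous on {x : I(x) < ε} for some ε > 0, where
I(x) = d(x, X∖{x}) is the isolation functional, then f is almost uniformly continuous. -/
theorem uniformlyContinuousOn_isolation_auc {X Y : Type*} [MetricSpace X] [MetricSpace Y]
    (f : X → Y) (ε : ℝ) (hε : 0 < ε)
    (hf : UniformContinuousOn f {x : X | Metric.infDist x {x}ᶜ < ε}) :
    Continuous f ∧ AlmostBounded f := by
  set S : Set X := {x : X | Metric.infDist x {x}ᶜ < ε} with hS
  -- any two distinct points at distance < ε are both in S
  have hmem : ∀ x y : X, x ≠ y → dist x y < ε → x ∈ S := by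
    intro x y hxy hd
    have : Metric.infDist x {x}ᶜ ≤ dist x y :=
      Metric.infDist_le_dist_of_mem (by simpa using hxy.symm)
    exact lt_of_le_of_lt this hd
  have hSopen : IsOpen S := by
    rw [Metric.isOpen_iff]
    intro x hx
    refine ⟨ε, hε, fun y hy => ?_⟩
    rcases eq_or_ne y x with rfl | hne
    · exact hx
    · exact hmem y x hne (by simpa [dist_comm] using hy)
  constructor
  · rw [continuous_iff_continuousAt]
    intro x
    by_cases hx : x ∈ S
    · exact (hf.continuousOn).continuousAt (hSopen.mem_nhds hx)
    · -- x is isolated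
      have hsingle : Metric.ball x ε = {x} := by
        ext y
        simp only [Metric.mem_ball, Set.mem_singleton_iff]
        constructor
        · intro hy
          by_contra hne
          exact hx (hmem x y (Ne.symm hne) (by simpa [dist_comm] using hy))
        · rintro rfl; simpa using hε
      have hopen : IsOpen ({x} : Set X) := hsingle ▸ Metric.isOpen_ball
      have := (isOpen_singleton_iff_nhds_eq_pure x).1 hopen
      rw [ContinuousAt, this]
      exact tendsto_pure_nhds f x
  · intro ε' hε'
    obtain ⟨δ₀, hδ₀, hδ⟩ := Metric.uniformContinuousOn_iff.1 hf ε' hε'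
    refine ⟨min δ₀ ε, lt_min hδ₀ hε, fun A hA => ?_⟩
    rcases A.eq_empty_or_nonempty with rfl | ⟨a, ha⟩
    · exact ⟨∅, by simp⟩
    refine ⟨{f a}, ?_⟩
    rintro _ ⟨x, hxA, rfl⟩
    simp only [Finset.mem_singleton, Set.iUnion_iUnion_eq_left, Metric.mem_ball]
    rcases eq_or_ne x a with rfl | hne
    · simpa using hε'
    · have hd : dist x a < min δ₀ ε := by
        have := EMetric.edist_le_diam_of_mem hxA ha
        exact edist_lt_ofReal.1 (lt_of_le_of_lt this hA)
      have hxS : x ∈ S := hmem x a hne (hd.trans_le (min_le_right _ _))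
      have haS : a ∈ S := hmem a x hne.symm (by rw [dist_comm]; exact hd.trans_le (min_le_right _ _))
      exact hδ x hxS a haS (hd.trans_le (min_le_left _ _))
end
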